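/- Let π₀ = π₁ ∘ φ₀ where π₁ : H → M is a fiber bundle over a path-connected base and φ₀ : H → H is homotopic to the identity. Suppose β is a ℤ/2-cohomology class of H whose restriction to some fiber π₀⁻¹(x) is nonzero, and suppose y is a point such that φ₀ restricted to π₀⁻¹(y) induces an injection on ℤ/2-cohomology of π₁⁻¹(y) into that of π₀⁻¹(y). Then the restriction of β to π₀⁻¹(y) is nonzero. -/

import Mathlib

/-- A (mod 2, say) cohomology theory on topological spaces: a contravariant,
homotopy-invariant assignment of a pointed type (cohomology with its zero class)
to each space. -/
structure CohomologyTheory : Type 1 where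
  coh : (X : Type) → [TopologicalSpace X] → Type
  zero : ∀ (X : Type) [TopologicalSpace X], coh X
  pull : ∀ {X Y : Type} [TopologicalSpace X] [TopologicalSpace Y], C(X, Y) → coh Y → coh X
  pull_id : ∀ {X : Type} [TopologicalSpace X] (β : coh X), pull (ContinuousMap.id X) β = β
  pull_comp : ∀ {X Y Z : Type} [TopologicalSpace X] [TopologicalSpace Y] [TopologicalSpace Z]
    (f : C(X, Y)) (g : C(Y, Z)) (β : coh Z), pull (g.comp f) β = pull f (pull g β)
  pull_zero : ∀ {X Y : Type} [TopologicalSpace X] [TopologicalSpace Y] (f : C(X, Y)),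
    pull f (zero Y) = zero X
  pull_homotopic : ∀ {X Y : Type} [TopologicalSpace X] [TopologicalSpace Y]
    (f g : C(X, Y)), f.Homotopic g → ∀ β : coh Y, pull f β = pull g β

/-- The inclusion of the fiber of `π` over `x` as a continuous map. -/
def fiberIncl {H M : Type} [TopologicalSpace H] (π : H → M) (x : M) :
    C({h : H // π h = x}, H) :=
  ⟨Subtype.val, continuous_subtype_val⟩

/-- The restriction of `φ₀` to a fiber of `π₀ = π₁ ∘ φ₀`, as a continuous map into the
corresponding fiber of `π₁`. -/
def phiFiberRestrict {H M : Type} [TopologicalSpace H] (π₁ : H → M) (φ₀ : C(H, H))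
    (y : M) : C({h : H // π₁ (φ₀ h) = y}, {h : H // π₁ h = y}) :=
  ⟨fun h => ⟨φ₀ h, h.2⟩, by fun_prop⟩

/-!
Since `φ₀` is homotopic to the identity, `φ₀^* β = β`, so for every `z` the restriction of `β`
to `π₀⁻¹(z)` is `(φ₀|)^*` of its restriction to `π₁⁻¹(z)`. Hence `β` does not vanish on
`π₁⁻¹(x)`. Over a trivializing open set, a path in the base from `a` to `b` deforms the inclusion
of `π₁⁻¹(b)` into a map through `π₁⁻¹(a)`; as the base is path-connected, whether `β` vanishes on
a fiber of `π₁` therefore does not depend on the fiber. So `β` does not vanish on `π₁⁻¹(y)`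
either, and injectivity of `(φ₀|)^*` over `y` concludes.
-/

open Topology

theorem PathConnectedSpace.of_joinedIn_nhds {M : Type*} [TopologicalSpace M]
    [PathConnectedSpace M] {P : M → Prop}
    (hP : ∀ z, ∃ U ∈ 𝓝 z, ∀ a b, JoinedIn U a b → P a → P b) {x y : M} (hx : P x) : P y := by
  obtain ⟨γ⟩ := PathConnectedSpace.joined x y
  have : LocallyPathConnectedSpace unitInterval := (convex_Icc (0 : ℝ) 1).locallyPathConnectedSpace
  have hloc : IsLocallyConstant (P ∘ γ) := by
    refine (IsLocallyConstant.iff_eventually_eq _).2 fun t => ?_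
    obtain ⟨U, hU, hPU⟩ := hP (γ t)
    filter_upwards [pathComponentIn_mem_nhds (γ.continuous.continuousAt.preimage_mem_nhds hU)]
      with s hs
    have hts : JoinedIn U (γ t) (γ s) := (hs.map γ.continuous).mono (Set.image_preimage_subset _ _)
    exact propext ⟨hPU _ _ hts.symm, hPU _ _ hts⟩
  have := hloc.apply_eq_of_preconnectedSpace 0 1
  simp only [Function.comp_apply, γ.source, γ.target] at this
  exact this ▸ hx

namespace Bundle.Trivialization

variable {H M F : Type} [TopologicalSpace H] [TopologicalSpace M] [TopologicalSpace F]
  {proj : H → M}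

/-- The homotopy moves the base point along a path from `a` to `b` inside `e.baseSet`, keeping
the `F`-coordinate fixed. -/
theorem exists_fiberIncl_homotopic (e : Trivialization F proj) {a b : M}
    (hab : JoinedIn e.baseSet a b) :
    ∃ g : C({h : H // proj h = b}, {h : H // proj h = a}),
      ((fiberIncl proj a).comp g).Homotopic (fiberIncl proj b) := by
  set γ := hab.somePath
  have hγ : ∀ t (v : F), (γ t, v) ∈ e.target := fun t _ => e.mem_target.2 (hab.somePath_mem t)
  have ha : ∀ v : F, (a, v) ∈ e.target := fun _ => e.mem_target.2 hab.source_mem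
  have hb : ∀ h : {h : H // proj h = b}, h.1 ∈ e.source := fun h =>
    e.mem_source.2 (by rw [h.2]; exact hab.target_mem)
  have hcoord : Continuous fun h : {h : H // proj h = b} => (e h.1).2 :=
    (e.toOpenPartialHomeomorph.continuousOn.comp_continuous continuous_subtype_val hb).snd
  have hK : Continuous fun p : unitInterval × {h : H // proj h = b} =>
      e.toOpenPartialHomeomorph.symm (γ p.1, (e p.2.1).2) :=
    e.toOpenPartialHomeomorph.continuousOn_symm.comp_continuous
      ((γ.continuous.comp continuous_fst).prodMk (hcoord.comp continuous_snd)) fun p => hγ p.1 _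
  let g : C({h : H // proj h = b}, {h : H // proj h = a}) :=
    ⟨fun h => ⟨e.toOpenPartialHomeomorph.symm (a, (e h.1).2), e.proj_symm_apply (ha _)⟩,
      (e.toOpenPartialHomeomorph.continuousOn_symm.comp_continuous
        (continuous_const.prodMk hcoord) fun _ => ha _).subtype_mk _⟩
  refine ⟨g, ⟨⟨⟨_, hK⟩, fun h => ?_, fun h => ?_⟩⟩⟩
  · simp [γ, g, fiberIncl]
  · simpa [γ, fiberIncl, ← h.2] using e.symm_apply_mk_proj (hb h)

end Bundle.Trivialization

namespace CohomologyTheory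

variable (Coh : CohomologyTheory) {X Y Z : Type} [TopologicalSpace X] [TopologicalSpace Y]
  [TopologicalSpace Z]

theorem pull_eq_zero_of_homotopic_comp {f : C(X, Z)} {g : C(Y, Z)} {k : C(X, Y)}
    (hfgk : (g.comp k).Homotopic f) {β : Coh.coh Z} (hβ : Coh.pull g β = Coh.zero Y) :
    Coh.pull f β = Coh.zero X := by
  rw [← Coh.pull_homotopic _ _ hfgk, Coh.pull_comp, hβ, Coh.pull_zero]

theorem pull_of_homotopic_id {f : C(X, X)} (hf : f.Homotopic (ContinuousMap.id X))
    (β : Coh.coh X) : Coh.pull f β = β := by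
  rw [Coh.pull_homotopic _ _ hf, Coh.pull_id]

section FiberBundle

variable {H M : Type} [TopologicalSpace H]

theorem pull_fiberIncl_eq_zero_of_eq_zero {F : Type} [TopologicalSpace M] [TopologicalSpace F]
    [PathConnectedSpace M] {proj : H → M}
    (htriv : ∀ z : M, ∃ e : Bundle.Trivialization F proj, z ∈ e.baseSet) (β : Coh.coh H)
    {x y : M} (hx : Coh.pull (fiberIncl proj x) β = Coh.zero _) :
    Coh.pull (fiberIncl proj y) β = Coh.zero _ := by
  refine PathConnectedSpace.of_joinedIn_nhds
    (P := fun z => Coh.pull (fiberIncl proj z) β = Coh.zero _) (fun z => ?_) hx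
  obtain ⟨e, hz⟩ := htriv z
  refine ⟨e.baseSet, e.open_baseSet.mem_nhds hz, fun a b hab ha => ?_⟩
  obtain ⟨g, hg⟩ := e.exists_fiberIncl_homotopic hab
  exact Coh.pull_eq_zero_of_homotopic_comp hg ha

theorem pull_fiberIncl_comp_eq_pull_phiFiberRestrict (π₁ : H → M) {φ₀ : C(H, H)}
    (hφ : φ₀.Homotopic (ContinuousMap.id H)) (β : Coh.coh H) (z : M) :
    Coh.pull (fiberIncl (fun h => π₁ (φ₀ h)) z) β =
      Coh.pull (phiFiberRestrict π₁ φ₀ z) (Coh.pull (fiberIncl π₁ z) β) := by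
  have hsquare : (fiberIncl π₁ z).comp (phiFiberRestrict π₁ φ₀ z) =
      φ₀.comp (fiberIncl (fun h => π₁ (φ₀ h)) z) := rfl
  rw [← Coh.pull_comp, hsquare, Coh.pull_comp, Coh.pull_of_homotopic_id hφ]

end FiberBundle

end CohomologyTheory

theorem stmt8_general (Coh : CohomologyTheory) {H M F : Type} [TopologicalSpace H]
    [TopologicalSpace M] [TopologicalSpace F] [PathConnectedSpace M]
    (π₁ : H → M)
    (htriv : ∀ x : M, ∃ e : Bundle.Trivialization F π₁, x ∈ e.baseSet)
    (φ₀ : C(H, H)) (hφ : φ₀.Homotopic (ContinuousMap.id H))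
    (β : Coh.coh H) (x y : M)
    (hx : Coh.pull (fiberIncl (fun h => π₁ (φ₀ h)) x) β ≠ Coh.zero _)
    (hinj : Function.Injective (Coh.pull (phiFiberRestrict π₁ φ₀ y))) :
    Coh.pull (fiberIncl (fun h => π₁ (φ₀ h)) y) β ≠ Coh.zero _ := by
  have hrestrict := Coh.pull_fiberIncl_comp_eq_pull_phiFiberRestrict π₁ hφ β
  have hx₁ : Coh.pull (fiberIncl π₁ x) β ≠ Coh.zero _ := fun h =>
    hx (by rw [hrestrict, h, Coh.pull_zero])
  have hy₁ : Coh.pull (fiberIncl π₁ y) β ≠ Coh.zero _ := fun h =>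
    hx₁ (Coh.pull_fiberIncl_eq_zero_of_eq_zero htriv β h)
  rw [hrestrict, ← Coh.pull_zero (phiFiberRestrict π₁ φ₀ y)]
  exact hinj.ne hy₁

/-- Let `π₁ : H → M` be a fiber bundle over a path-connected base, `φ₀ ≃ id_H`, and
`π₀ := π₁ ∘ φ₀`.  If a cohomology class `β` of `H` restricts nontrivially to `π₀⁻¹(x)`,
and `φ₀|_{π₀⁻¹(y)}` induces an injection on cohomology, then `β` restricts nontrivially
to `π₀⁻¹(y)`. -/
theorem stmt8 (Coh : CohomologyTheory) {H M F : Type} [TopologicalSpace H]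
    [TopologicalSpace M] [TopologicalSpace F] [PathConnectedSpace M]
    (π₁ : H → M) (hπ : Continuous π₁)
    (htriv : ∀ x : M, ∃ e : Bundle.Trivialization F π₁, x ∈ e.baseSet)
    (φ₀ : C(H, H)) (hφ : φ₀.Homotopic (ContinuousMap.id H))
    (β : Coh.coh H) (x y : M)
    (hx : Coh.pull (fiberIncl (fun h => π₁ (φ₀ h)) x) β ≠ Coh.zero _)
    (hinj : Function.Injective (Coh.pull (phiFiberRestrict π₁ φ₀ y))) :
    Coh.pull (fiberIncl (fun h => π₁ (φ₀ h)) y) β ≠ Coh.zero _ :=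
  stmt8_general Coh π₁ htriv φ₀ hφ β x y hx hinj
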